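/- Let δ > 0 and let W : ℝ³ → [0,∞) be a continuous even function, not identically zero, supported in the closed unit ball of ℝ³. Let A ≥ 3^{3/2} c_δ^{-1/2} e^{δ/2} / ‖W‖_{L¹}, and let v₀ : ℝ³ → [0,∞) be measurable with v₀(ξ) ≥ A·W(ξ) for all ξ. If v : [0,δ/2] × ℝ³ → [0,∞) solves the Fourier-side cubic heat integral equation with datum v₀, then ∫_{ℝ³} v(δ/2, ξ) dξ = ∞; in particular v(δ/2,·) is not integrable, so there is no such solution v with v(t,·) ∈ L¹(ℝ³) for every t ∈ [0, δ/2]. -/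

import Mathlib

open MeasureTheory

noncomputable section

/-- `ℝ³` as Euclidean space. -/
abbrev E3 := EuclideanSpace ℝ (Fin 3)

/-- Convolution of two `[0,∞]`-valued functions on `ℝ³` (lower Lebesgue integral). -/
def lconv (f g : E3 → ENNReal) : E3 → ENNReal := fun ξ => ∫⁻ y, f y * g (ξ - y)

/-- The triple convolution `f * f * f` of a `[0,∞]`-valued function on `ℝ³`. -/
def lconv3 (f : E3 → ENNReal) : E3 → ENNReal := lconv (lconv f f) f

/-- `v` solves the Fourier-side cubic heat integral equation on `[0,T]` with datum `v₀`. -/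
def SolvesFourierCubic (T : ℝ) (v₀ : E3 → ℝ) (v : ℝ → E3 → ℝ) : Prop :=
  ∀ t ∈ Set.Icc (0 : ℝ) T, ∀ ξ : E3,
    ENNReal.ofReal (v t ξ) =
      ENNReal.ofReal (Real.exp (-t * ‖ξ‖ ^ 2) * v₀ ξ) +
        ∫⁻ s in Set.Ioo (0 : ℝ) t,
          ENNReal.ofReal (Real.exp (-(t - s) * ‖ξ‖ ^ 2)) *
            lconv3 (fun y => ENNReal.ofReal (v s y)) ξ

/-- `c_δ = 1 - e^{-4δ}`. -/
def cDelta (δ : ℝ) : ℝ := 1 - Real.exp (-4 * δ)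

/-!
Iterating the Duhamel formula gives a cascade of lower bounds. Put `T = δ/2` and `c = c_δ`. On
`[0, T]` the free evolution already gives `v ≥ g₀ := A e^{-δ/2} W`. If `v(s) ≥ g_k` for
`s ∈ [t_k, T]`, then `g_k * g_k * g_k` lives in the ball of radius `3^{k+1}`, where the heat factor
`e^{-(t-s)|ξ|²}` is at least `e^{-(t-s) 9^{k+1}}`; integrating over `s ∈ (t_k, t)` yields
`v(t) ≥ g_{k+1} := c 9^{-(k+1)} g_k * g_k * g_k` once `(t - t_k) 9^{k+1} ≥ 4δ`, which holds for
`t ≥ t_{k+1}` with `t_k = T (1 - 9^{-k}) < T`. The masses `m_k = ‖g_k‖_{L¹}` obey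
`m_{k+1} = c 9^{-(k+1)} m_k³`, so `y_k = m_k / (3^k L)` with `L = 3^{3/2} c^{-1/2}` satisfies
`y_{k+1} = y_k³`. The hypothesis on `A` says `y₀ ≥ 1`, hence `‖v(T)‖_{L¹} ≥ m_k ≥ 3^k L → ∞`.
-/

open Filter
open scoped ENNReal

theorem lconv_mono {f f' g g' : E3 → ℝ≥0∞} (hf : f ≤ f') (hg : g ≤ g') :
    lconv f g ≤ lconv f' g' :=
  fun _ => lintegral_mono fun y => mul_le_mul' (hf y) (hg _)

theorem lconv3_mono : Monotone lconv3 :=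
  fun _ _ hf => lconv_mono (lconv_mono hf hf) hf

theorem measurable_lconv {f g : E3 → ℝ≥0∞} (hf : Measurable f) (hg : Measurable g) :
    Measurable (lconv f g) :=
  Measurable.lintegral_prod_right <|
    (hf.comp measurable_snd).mul (hg.comp (measurable_fst.sub measurable_snd))

theorem measurable_lconv3 {f : E3 → ℝ≥0∞} (hf : Measurable f) : Measurable (lconv3 f) :=
  measurable_lconv (measurable_lconv hf hf) hf

theorem lintegral_lconv {f g : E3 → ℝ≥0∞} (hf : Measurable f) (hg : Measurable g) :
    ∫⁻ ξ, lconv f g ξ = (∫⁻ y, f y) * ∫⁻ y, g y := by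
  have hinner : ∀ y : E3, ∫⁻ ξ, f y * g (ξ - y) = f y * ∫⁻ z, g z := fun y => by
    rw [lintegral_const_mul (f := fun ξ => g (ξ - y)) _ (hg.comp (measurable_sub_const y)),
      (measurePreserving_sub_right volume y).lintegral_comp hg]
  unfold lconv
  rw [lintegral_lintegral_swap, funext hinner, lintegral_mul_const _ hf]
  exact ((hf.comp measurable_snd).mul (hg.comp (measurable_fst.sub measurable_snd))).aemeasurable

theorem lintegral_lconv3 {f : E3 → ℝ≥0∞} (hf : Measurable f) :
    ∫⁻ ξ, lconv3 f ξ = (∫⁻ y, f y) ^ 3 := by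
  rw [lconv3, lintegral_lconv (measurable_lconv hf hf) hf, lintegral_lconv hf hf, pow_three,
    mul_comm]

theorem lconv_eq_zero_of_lt_norm {f g : E3 → ℝ≥0∞} {r s : ℝ}
    (hf : ∀ y, r < ‖y‖ → f y = 0) (hg : ∀ y, s < ‖y‖ → g y = 0)
    {ξ : E3} (hξ : r + s < ‖ξ‖) : lconv f g ξ = 0 := by
  refine (lintegral_congr fun y => ?_).trans lintegral_zero
  rcases le_or_gt ‖y‖ r with hy | hy
  · rw [hg _ (by linarith [norm_sub_norm_le ξ y]), mul_zero]
  · rw [hf y hy, zero_mul]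

theorem lconv3_eq_zero_of_lt_norm {f : E3 → ℝ≥0∞} {r : ℝ} (hf : ∀ y, r < ‖y‖ → f y = 0)
    {ξ : E3} (hξ : 3 * r < ‖ξ‖) : lconv3 f ξ = 0 :=
  lconv_eq_zero_of_lt_norm (fun _ hy => lconv_eq_zero_of_lt_norm hf hf hy) hf (by linarith)

theorem setLIntegral_ofReal_exp_mul_sub {τ t M : ℝ} (hτt : τ ≤ t) (hM : 0 < M) :
    ∫⁻ s in Set.Ioo τ t, ENNReal.ofReal (Real.exp (-(t - s) * M)) =
      ENNReal.ofReal ((1 - Real.exp (-(t - τ) * M)) / M) := by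
  have hcont : Continuous fun s : ℝ => Real.exp (-(t - s) * M) := by fun_prop
  rw [← ofReal_integral_eq_lintegral_ofReal
      ((hcont.integrableOn_Icc).mono_set Set.Ioo_subset_Icc_self)
      (Eventually.of_forall fun s => (Real.exp_pos _).le),
    ← integral_Ioc_eq_integral_Ioo, ← intervalIntegral.integral_of_le hτt]
  have hrw : (fun s => Real.exp (-(t - s) * M)) = fun s => Real.exp (M * s - t * M) := by
    ext s; ring_nf
  rw [hrw, intervalIntegral.integral_comp_mul_sub Real.exp hM.ne', integral_exp, smul_eq_mul]
  congr 1
  rw [show M * t - t * M = 0 by ring, show M * τ - t * M = -(t - τ) * M by ring, Real.exp_zero]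
  field_simp

section Cascade

def cascadeBound (c : ℝ) (g₀ : E3 → ℝ≥0∞) : ℕ → E3 → ℝ≥0∞
  | 0 => g₀
  | k + 1 => fun ξ => ENNReal.ofReal (c / 9 ^ (k + 1)) * lconv3 (cascadeBound c g₀ k) ξ

def cascadeMass (c m₀ : ℝ) : ℕ → ℝ
  | 0 => m₀
  | k + 1 => c / 9 ^ (k + 1) * cascadeMass c m₀ k ^ 3

def cascadeTime (T : ℝ) (k : ℕ) : ℝ := T * (1 - 9⁻¹ ^ k)

variable {c m₀ T : ℝ} {g₀ : E3 → ℝ≥0∞}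

theorem measurable_cascadeBound (hg₀ : Measurable g₀) (k : ℕ) :
    Measurable (cascadeBound c g₀ k) := by
  induction k with
  | zero => exact hg₀
  | succ k ih => exact (measurable_lconv3 ih).const_mul _

theorem cascadeBound_eq_zero_of_lt_norm {R : ℝ} (hg₀ : ∀ ξ, R < ‖ξ‖ → g₀ ξ = 0) (k : ℕ)
    {ξ : E3} (hξ : 3 ^ k * R < ‖ξ‖) : cascadeBound c g₀ k ξ = 0 := by
  induction k generalizing ξ with
  | zero => exact hg₀ ξ (by simpa using hξ)
  | succ k ih =>
    show _ * _ = 0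
    rw [lconv3_eq_zero_of_lt_norm (fun _ => ih) (by rwa [← mul_assoc, ← pow_succ']),
      mul_zero]

theorem cascadeMass_nonneg (hc : 0 ≤ c) (hm₀ : 0 ≤ m₀) (k : ℕ) : 0 ≤ cascadeMass c m₀ k := by
  induction k with
  | zero => exact hm₀
  | succ k ih => unfold cascadeMass; positivity

theorem lintegral_cascadeBound (hc : 0 ≤ c) (hm₀ : 0 ≤ m₀) (hg₀ : Measurable g₀)
    (hmass : ∫⁻ ξ, g₀ ξ = ENNReal.ofReal m₀) (k : ℕ) :
    ∫⁻ ξ, cascadeBound c g₀ k ξ = ENNReal.ofReal (cascadeMass c m₀ k) := by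
  induction k with
  | zero => exact hmass
  | succ k ih =>
    rw [cascadeBound, lintegral_const_mul _ (measurable_lconv3 (measurable_cascadeBound hg₀ k)),
      lintegral_lconv3 (measurable_cascadeBound hg₀ k), ih,
      ← ENNReal.ofReal_pow (cascadeMass_nonneg hc hm₀ k), ← ENNReal.ofReal_mul (by positivity),
      cascadeMass]

theorem cascadeMass_tendsto_atTop (hc : 0 < c)
    (hm₀ : (3 : ℝ) ^ ((3 : ℝ) / 2) * c ^ (-(1 : ℝ) / 2) ≤ m₀) :
    Tendsto (cascadeMass c m₀) atTop atTop := by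
  set L := (3 : ℝ) ^ ((3 : ℝ) / 2) * c ^ (-(1 : ℝ) / 2)
  have hL : 0 < L := by positivity
  have hcL : c * L ^ 2 = 27 := by
    rw [mul_pow, ← Real.rpow_natCast, ← Real.rpow_natCast (c ^ _), ← Real.rpow_mul (by norm_num),
      ← Real.rpow_mul hc.le]
    norm_num [Real.rpow_neg_one, hc.ne']
    field_simp
  have hcube : ∀ k, cascadeMass c m₀ k / (3 ^ k * L) = (m₀ / L) ^ 3 ^ k := by
    intro k
    induction k with
    | zero => simp [cascadeMass]
    | succ k ih =>
      rw [pow_succ (3 : ℕ) k, pow_mul, ← ih, cascadeMass]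
      have h27 : (9 : ℝ) ^ (k + 1) * 3 ^ (k + 1) = 27 * (3 ^ k) ^ 3 := by
        rw [← mul_pow, ← pow_mul, mul_comm k, pow_mul, pow_succ]; ring
      field_simp
      linear_combination (cascadeMass c m₀ k ^ 3 * (3 ^ k) ^ 3) * hcL - cascadeMass c m₀ k ^ 3 * h27
  have hlower : ∀ k, 3 ^ k * L ≤ cascadeMass c m₀ k := fun k => by
    have : 1 ≤ cascadeMass c m₀ k / (3 ^ k * L) :=
      hcube k ▸ one_le_pow₀ ((one_le_div hL).2 hm₀)
    rwa [one_le_div (by positivity)] at this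
  exact tendsto_atTop_mono hlower
    ((tendsto_pow_atTop_atTop_of_one_lt (by norm_num : (1 : ℝ) < 3)).atTop_mul_const hL)

theorem cascadeTime_zero : cascadeTime T 0 = 0 := by simp [cascadeTime]

theorem cascadeTime_nonneg (hT : 0 ≤ T) (k : ℕ) : 0 ≤ cascadeTime T k :=
  mul_nonneg hT (sub_nonneg.2 (pow_le_one₀ (by norm_num) (by norm_num)))

theorem cascadeTime_le (hT : 0 ≤ T) (k : ℕ) : cascadeTime T k ≤ T :=
  mul_le_of_le_one_right hT (sub_le_self _ (by positivity))

theorem cascadeTime_succ_sub_mul (T : ℝ) (k : ℕ) :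
    (cascadeTime T (k + 1) - cascadeTime T k) * 9 ^ (k + 1) = 8 * T := by
  have h : (9⁻¹ : ℝ) ^ k * 9 ^ k = 1 := by rw [← mul_pow]; norm_num
  unfold cascadeTime
  linear_combination 8 * T * h

theorem cascadeTime_le_succ (hT : 0 ≤ T) (k : ℕ) : cascadeTime T k ≤ cascadeTime T (k + 1) := by
  have h := cascadeTime_succ_sub_mul T k
  nlinarith [pow_pos (by norm_num : (0 : ℝ) < 9) (k + 1)]

end Cascade

namespace SolvesFourierCubic

variable {T : ℝ} {v₀ : E3 → ℝ} {v : ℝ → E3 → ℝ}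

theorem ofReal_exp_mul_le (hsol : SolvesFourierCubic T v₀ v) {t : ℝ} (ht : t ∈ Set.Icc 0 T)
    (ξ : E3) : ENNReal.ofReal (Real.exp (-t * ‖ξ‖ ^ 2) * v₀ ξ) ≤ ENNReal.ofReal (v t ξ) :=
  (hsol t ht ξ).symm ▸ le_self_add

theorem ofReal_mul_lconv3_le (hsol : SolvesFourierCubic T v₀ v) {g : E3 → ℝ≥0∞} {τ t M : ℝ}
    (hτ : 0 ≤ τ) (hτt : τ ≤ t) (htT : t ≤ T) (hM : 0 < M)
    (hg : ∀ s ∈ Set.Ioo τ t, g ≤ fun ξ => ENNReal.ofReal (v s ξ)) {ξ : E3} (hξ : ‖ξ‖ ^ 2 ≤ M) :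
    ENNReal.ofReal ((1 - Real.exp (-(t - τ) * M)) / M) * lconv3 g ξ ≤ ENNReal.ofReal (v t ξ) := by
  rw [hsol t ⟨hτ.trans hτt, htT⟩ ξ, ← setLIntegral_ofReal_exp_mul_sub hτt hM,
    ← lintegral_mul_const _ (by fun_prop)]
  refine le_add_left <| (setLIntegral_mono' measurableSet_Ioo fun s hs => ?_).trans
    (lintegral_mono_set (Set.Ioo_subset_Ioo_left hτ))
  gcongr ?_ * ?_
  · exact ENNReal.ofReal_le_ofReal (Real.exp_le_exp.2 (by nlinarith [hs.2]))
  · exact lconv3_mono (hg s hs) ξ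

theorem ofReal_mul_exp_neg_mul_le (hsol : SolvesFourierCubic T v₀ v) {W : E3 → ℝ} {A : ℝ}
    (hA : 0 ≤ A) (hW : ∀ ξ, 0 ≤ W ξ) (hW0 : ∀ ξ, 1 < ‖ξ‖ → W ξ = 0) (hv₀ : ∀ ξ, A * W ξ ≤ v₀ ξ) :
    ∀ t ∈ Set.Icc 0 T, (fun ξ => ENNReal.ofReal (A * Real.exp (-T) * W ξ)) ≤
      fun ξ => ENNReal.ofReal (v t ξ) := by
  rintro t ⟨ht0, htT⟩ ξ
  refine le_trans (ENNReal.ofReal_le_ofReal ?_) (hsol.ofReal_exp_mul_le ⟨ht0, htT⟩ ξ)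
  rcases lt_or_ge 1 ‖ξ‖ with hξ | hξ
  · rw [hW0 ξ hξ, mul_zero]
    exact mul_nonneg (Real.exp_pos _).le (by simpa [hW0 ξ hξ] using hv₀ ξ)
  have hdecay : t * ‖ξ‖ ^ 2 ≤ T := by
    nlinarith [mul_le_mul_of_nonneg_left (pow_le_one₀ (n := 2) (norm_nonneg ξ) hξ) ht0]
  calc A * Real.exp (-T) * W ξ = Real.exp (-T) * (A * W ξ) := by ring
    _ ≤ Real.exp (-t * ‖ξ‖ ^ 2) * v₀ ξ :=
      mul_le_mul (Real.exp_le_exp.2 (by linarith)) (hv₀ ξ) (mul_nonneg hA (hW ξ))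
        (Real.exp_pos _).le

theorem cascadeBound_le (hsol : SolvesFourierCubic T v₀ v) (hT : 0 ≤ T) {g₀ : E3 → ℝ≥0∞}
    (hg₀ : ∀ ξ, 1 < ‖ξ‖ → g₀ ξ = 0) (h₀ : ∀ t ∈ Set.Icc 0 T, g₀ ≤ fun ξ => ENNReal.ofReal (v t ξ))
    (k : ℕ) : ∀ t ∈ Set.Icc (cascadeTime T k) T,
      cascadeBound (1 - Real.exp (-(8 * T))) g₀ k ≤ fun ξ => ENNReal.ofReal (v t ξ) := by
  induction k with
  | zero => exact cascadeTime_zero (T := T) ▸ h₀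
  | succ k ih =>
    rintro t ⟨htk, htT⟩ ξ
    rcases lt_or_ge (3 ^ (k + 1)) ‖ξ‖ with hξ | hξ
    · rw [cascadeBound_eq_zero_of_lt_norm hg₀ (k + 1) (by rwa [mul_one])]
      exact zero_le
    have hτt : cascadeTime T k ≤ t := (cascadeTime_le_succ hT k).trans htk
    have hM : (0 : ℝ) < 9 ^ (k + 1) := by positivity
    have hξM : ‖ξ‖ ^ 2 ≤ 9 ^ (k + 1) := by
      rw [show (9 : ℝ) = 3 ^ 2 by norm_num, ← pow_mul, mul_comm, pow_mul]
      exact pow_le_pow_left₀ (norm_nonneg ξ) hξ 2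
    have hgap : 8 * T ≤ (t - cascadeTime T k) * 9 ^ (k + 1) := by
      rw [← cascadeTime_succ_sub_mul T k]
      gcongr
    calc cascadeBound (1 - Real.exp (-(8 * T))) g₀ (k + 1) ξ
        ≤ ENNReal.ofReal ((1 - Real.exp (-(t - cascadeTime T k) * 9 ^ (k + 1))) / 9 ^ (k + 1)) *
            lconv3 (cascadeBound (1 - Real.exp (-(8 * T))) g₀ k) ξ := by
          refine mul_le_mul_left (ENNReal.ofReal_le_ofReal ?_) _
          gcongr
          linarith
      _ ≤ ENNReal.ofReal (v t ξ) :=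
          hsol.ofReal_mul_lconv3_le (cascadeTime_nonneg hT k) hτt htT hM
            (fun s hs => ih s ⟨hs.1.le, hs.2.le.trans htT⟩) hξM

end SolvesFourierCubic

theorem stmt_8_general (δ A : ℝ) (hδ : 0 < δ)
    (W : E3 → ℝ) (hWcont : Continuous W) (hWnonneg : ∀ ξ, 0 ≤ W ξ)
    (hWne : W ≠ 0)
    (hWsupp : Function.support W ⊆ Metric.closedBall 0 1)
    (hA : (3 : ℝ) ^ ((3 : ℝ) / 2) * cDelta δ ^ (-(1 : ℝ) / 2) * Real.exp (δ / 2) /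
        (∫ ξ, W ξ) ≤ A)
    (v₀ : E3 → ℝ)
    (hv₀ge : ∀ ξ, A * W ξ ≤ v₀ ξ)
    (v : ℝ → E3 → ℝ)
    (hsol : SolvesFourierCubic (δ / 2) v₀ v) :
    ∫⁻ ξ, ENNReal.ofReal (v (δ / 2) ξ) = ⊤ := by
  have hc : 0 < cDelta δ := by
    rw [cDelta, sub_pos, Real.exp_lt_one_iff]; linarith
  have hW0 : ∀ ξ, 1 < ‖ξ‖ → W ξ = 0 := fun ξ hξ =>
    Function.notMem_support.1 fun h => (mem_closedBall_zero_iff.1 (hWsupp h)).not_gt hξ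
  have hWcs : HasCompactSupport W :=
    HasCompactSupport.of_support_subset_isCompact (isCompact_closedBall 0 1) hWsupp
  obtain ⟨ξ₀, hξ₀⟩ := Function.ne_iff.1 hWne
  have hI : 0 < ∫ ξ, W ξ :=
    hWcont.integral_pos_of_hasCompactSupport_nonneg_nonzero hWcs hWnonneg hξ₀
  have hA0 : 0 < A := (by positivity : (0 : ℝ) < _).trans_le hA
  set a := A * Real.exp (-(δ / 2))
  have hm₀ : (3 : ℝ) ^ ((3 : ℝ) / 2) * cDelta δ ^ (-(1 : ℝ) / 2) ≤ a * ∫ ξ, W ξ := by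
    rw [div_le_iff₀ hI, ← le_div_iff₀ (Real.exp_pos _)] at hA
    exact hA.trans_eq (by simp only [a, Real.exp_neg]; ring)
  have hmass : ∫⁻ ξ, ENNReal.ofReal (a * W ξ) = ENNReal.ofReal (a * ∫ ξ, W ξ) := by
    rw [← integral_const_mul, ofReal_integral_eq_lintegral_ofReal
      ((hWcont.integrable_of_hasCompactSupport hWcs).const_mul a)
      (Eventually.of_forall fun ξ => mul_nonneg (by positivity) (hWnonneg ξ))]
  have hcδ : cDelta δ = 1 - Real.exp (-(8 * (δ / 2))) := by rw [cDelta]; ring_nf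
  refine top_unique <| le_of_tendsto'
    (ENNReal.tendsto_ofReal_atTop.comp (cascadeMass_tendsto_atTop hc hm₀)) fun k => ?_
  calc ENNReal.ofReal (cascadeMass (cDelta δ) (a * ∫ ξ, W ξ) k)
      = ∫⁻ ξ, cascadeBound (cDelta δ) (fun ξ => ENNReal.ofReal (a * W ξ)) k ξ :=
        (lintegral_cascadeBound hc.le (by positivity) (by fun_prop) hmass k).symm
    _ ≤ ∫⁻ ξ, ENNReal.ofReal (v (δ / 2) ξ) := lintegral_mono <| hcδ ▸
        hsol.cascadeBound_le (by positivity) (fun ξ hξ => by simp [hW0 ξ hξ])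
          (hsol.ofReal_mul_exp_neg_mul_le hA0.le hWnonneg hW0 hv₀ge) k _
          ⟨cascadeTime_le (by positivity) k, le_rfl⟩

theorem stmt_8 (δ A : ℝ) (hδ : 0 < δ)
    (W : E3 → ℝ) (hWcont : Continuous W) (hWnonneg : ∀ ξ, 0 ≤ W ξ)
    (hWeven : ∀ ξ, W (-ξ) = W ξ) (hWne : W ≠ 0)
    (hWsupp : Function.support W ⊆ Metric.closedBall 0 1)
    (hA : (3 : ℝ) ^ ((3 : ℝ) / 2) * cDelta δ ^ (-(1 : ℝ) / 2) * Real.exp (δ / 2) /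
        (∫ ξ, W ξ) ≤ A)
    (v₀ : E3 → ℝ) (hv₀meas : Measurable v₀) (hv₀nonneg : ∀ ξ, 0 ≤ v₀ ξ)
    (hv₀ge : ∀ ξ, A * W ξ ≤ v₀ ξ)
    (v : ℝ → E3 → ℝ) (hvmeas : Measurable (Function.uncurry v))
    (hvnonneg : ∀ t ξ, 0 ≤ v t ξ)
    (hsol : SolvesFourierCubic (δ / 2) v₀ v) :
    ∫⁻ ξ, ENNReal.ofReal (v (δ / 2) ξ) = ⊤ :=
  stmt_8_general δ A hδ W hWcont hWnonneg hWne hWsupp hA v₀ hv₀ge v hsol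

end
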